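/- Let Q1, Q2 be the integer quadratic forms Q1 = u*v + u*w - 4*v*w + 2*v*z + 2*w*z + x^2 - 2*x*z + y^2 - z^2 and Q2 = u*v - u*w + u*y - 2*v^2 + 2*v*x - 2*w*y + 2*w*z + 2*x*z. Over ℚ, the scheme X = {Q1 = 0} ∩ {Q2 = 0} ⊂ ℙ^5_ℚ is smooth of dimension 3, i.e., at every point of X(ℚ̄) the Jacobian matrix of (Q1, Q2) has rank 2. -/

import Mathlib

/-!
The gradients of `Q1` and `Q2` at `v` are `H₁ v` and `H₂ v`, where `H₁, H₂` are the (symmetric)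
Hessians. If they were dependent, then either `H₂ v = 0`, impossible as `det H₂ = 64`, or
`(H₁ - μ H₂) v = 0` for some `μ`. Together with `vᵀ H₂ v = 2 Q2(v) = 0` this makes `μ` a double
root of `det (H₁ - X H₂)`: in a basis containing `v`, one row and one column of `H₁ - X H₂` are
divisible by `X - μ` and their common entry vanishes. But
`det (H₁ - X H₂) = 64 (X⁶ + 3X⁵ - 2X⁴ - 3X³ + 3X² + 3X + 2)` is separable.
-/

open MvPolynomial

/-- `Q1` in the variables `(u,v,w,x,y,z) = (X 0, …, X 5)` over `ℚ`. -/
noncomputable def Q1Q : MvPolynomial (Fin 6) ℚ :=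
  X 0 * X 1 + X 0 * X 2 - 4 * X 1 * X 2 + 2 * X 1 * X 5 + 2 * X 2 * X 5 + X 3 ^ 2 -
    2 * X 3 * X 5 + X 4 ^ 2 - X 5 ^ 2

/-- `Q2` in the variables `(u,v,w,x,y,z) = (X 0, …, X 5)` over `ℚ`. -/
noncomputable def Q2Q : MvPolynomial (Fin 6) ℚ :=
  X 0 * X 1 - X 0 * X 2 + X 0 * X 4 - 2 * X 1 ^ 2 + 2 * X 1 * X 3 - 2 * X 2 * X 4 +
    2 * X 2 * X 5 + 2 * X 3 * X 5

open scoped Polynomial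

namespace Matrix

section Determinant

variable {n R : Type*} [Fintype n] [DecidableEq n] [CommRing R]

theorem sq_dvd_det_of_dvd_row_of_dvd_col {N : Matrix n n R} {d : R} {k : n}
    (hrow : ∀ j, d ∣ N k j) (hcol : ∀ i, d ∣ N i k) (hkk : N k k = 0) : d ^ 2 ∣ N.det := by
  rw [det_apply']
  refine Finset.dvd_sum fun σ _ => dvd_mul_of_dvd_right ?_ _
  by_cases hσ : σ k = k
  · rw [Finset.prod_eq_zero (f := fun i => N (σ i) i) (Finset.mem_univ k) (by rw [hσ, hkk])]
    exact dvd_zero _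
  · -- the term of `σ` contains the two distinct factors `N (σ k) k` and `N k (σ⁻¹ k)`
    have hne : k ≠ σ.symm k := fun h => hσ (by rw [h, Equiv.apply_symm_apply, ← h])
    calc d ^ 2 ∣ N (σ k) k * N (σ (σ.symm k)) (σ.symm k) := by
          rw [sq, Equiv.apply_symm_apply]; exact mul_dvd_mul (hcol _) (hrow _)
      _ = ∏ i ∈ {k, σ.symm k}, N (σ i) i :=
          (Finset.prod_pair (f := fun i => N (σ i) i) hne).symm
      _ ∣ ∏ i, N (σ i) i := Finset.prod_dvd_prod_of_subset _ _ _ (Finset.subset_univ _)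

theorem det_updateCol_mulVec (A : Matrix n n R) (j : n) (v : n → R) :
    (A.updateCol j (A *ᵥ v)).det = v j * A.det := by
  rw [← smul_eq_mul, ← det_updateCol_sum]
  congr
  ext i
  simp [mulVec, dotProduct, mul_comm]

theorem det_updateRow_vecMul (A : Matrix n n R) (j : n) (v : n → R) :
    (A.updateRow j (v ᵥ* A)).det = v j * A.det := by
  rw [← smul_eq_mul, ← det_updateRow_sum]
  congr
  ext i
  simp [vecMul, dotProduct, Finset.sum_apply]

theorem sq_dvd_sq_mul_det_of_isSymm {N : Matrix n n R} (hN : N.IsSymm) {v : n → R} {d : R}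
    (hdvd : ∀ i, d ∣ (N *ᵥ v) i) (hv : v ⬝ᵥ N *ᵥ v = 0) (k : n) :
    d ^ 2 ∣ v k ^ 2 * N.det := by
  -- `N''` is `Pᵀ N P`, where `P` is the identity with its `k`-th column replaced by `v`
  set N' := N.updateCol k (N *ᵥ v)
  set N'' := N'.updateRow k (v ᵥ* N')
  have hvN' : ∀ j, (v ᵥ* N') j = if j = k then v ⬝ᵥ N *ᵥ v else (N *ᵥ v) j := by
    intro j
    split_ifs with hj
    · subst hj; simp [N', vecMul, dotProduct]
    · rw [← hN.eq, mulVec_transpose]; simp [N', vecMul, dotProduct, hj]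
  have hrowk : ∀ j, N'' k j = (v ᵥ* N') j := fun j => by simp [N'']
  have hkk : N'' k k = 0 := by rw [hrowk, hvN', if_pos rfl, hv]
  have hdet : N''.det = v k ^ 2 * N.det := by
    rw [det_updateRow_vecMul, det_updateCol_mulVec, sq, mul_assoc]
  rw [← hdet]
  refine sq_dvd_det_of_dvd_row_of_dvd_col (k := k) (fun j => ?_) (fun i => ?_) hkk
  · by_cases hj : j = k
    · rw [hj, hkk]; exact dvd_zero d
    · rw [hrowk, hvN', if_neg hj]; exact hdvd j
  · by_cases hi : i = k
    · rw [hi, hkk]; exact dvd_zero d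
    · rw [show N'' i k = (N *ᵥ v) i by simp [N'', N', hi]]; exact hdvd i

end Determinant

section Pencil

variable {n : Type*}

noncomputable def pencil {R : Type*} [CommRing R] (A B : Matrix n n R) : Matrix n n R[X] :=
  A.map Polynomial.C - (Polynomial.X : R[X]) • B.map Polynomial.C

theorem pencil_map {R S : Type*} [CommRing R] [CommRing S] (f : R →+* S) (A B : Matrix n n R) :
    (pencil A B).map (Polynomial.mapRingHom f) = pencil (A.map f) (B.map f) := by
  ext i j
  simp [pencil]

variable [Fintype n] [DecidableEq n] {K : Type*} [Field K]

theorem sq_dvd_det_pencil {A B : Matrix n n K} (hA : A.IsSymm) (hB : B.IsSymm) {μ : K}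
    {v : n → K} (hv : v ≠ 0) (hμ : (A - μ • B) *ᵥ v = 0) (hvB : v ⬝ᵥ B *ᵥ v = 0) :
    (Polynomial.X - Polynomial.C μ) ^ 2 ∣ (pencil A B).det := by
  obtain ⟨k, hk⟩ := Function.ne_iff.mp hv
  set N := pencil A B
  have hN : N.IsSymm := (hA.map _).sub ((hB.map _).smul _)
  have hAv : A *ᵥ v = μ • B *ᵥ v := by
    rwa [sub_mulVec, smul_mulVec, sub_eq_zero] at hμ
  have hNv : N *ᵥ (Polynomial.C ∘ v) =
      (Polynomial.C μ - Polynomial.X) • (Polynomial.C ∘ (B *ᵥ v)) := by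
    funext i
    simp only [N, pencil, sub_mulVec, smul_mulVec, Pi.sub_apply, Pi.smul_apply,
      ← RingHom.map_mulVec, hAv, Function.comp_apply, smul_eq_mul, map_mul]
    ring
  have hdvd : ∀ i, Polynomial.X - Polynomial.C μ ∣ (N *ᵥ (Polynomial.C ∘ v)) i := fun i => by
    rw [hNv, Pi.smul_apply, smul_eq_mul]
    exact Dvd.intro (-(Polynomial.C ∘ (B *ᵥ v)) i) (by ring)
  have hvNv : (Polynomial.C ∘ v) ⬝ᵥ N *ᵥ (Polynomial.C ∘ v) = 0 := by
    rw [hNv, dotProduct_smul, ← RingHom.map_dotProduct, hvB, map_zero, smul_zero]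
  have := sq_dvd_sq_mul_det_of_isSymm hN hdvd hvNv k
  rwa [Function.comp_apply, ← map_pow,
    IsUnit.dvd_mul_left (Polynomial.isUnit_C.mpr (hk.isUnit.pow 2))] at this

theorem linearIndependent_mulVec_pair {A B : Matrix n n K} (hA : A.IsSymm) (hB : B.IsSymm)
    (hdetB : B.det ≠ 0) (hsq : Squarefree (pencil A B).det) {v : n → K} (hv : v ≠ 0)
    (hvB : v ⬝ᵥ B *ᵥ v = 0) : LinearIndependent K ![A *ᵥ v, B *ᵥ v] := by
  rw [LinearIndependent.pair_iff]
  intro s t hst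
  by_cases hs : s = 0
  · subst hs
    refine ⟨rfl, by_contra fun ht => hv (eq_zero_of_mulVec_eq_zero hdetB ?_)⟩
    simpa [ht] using hst
  · have hμ : (A - (-t / s) • B) *ᵥ v = 0 :=
      calc (A - (-t / s) • B) *ᵥ v = s⁻¹ • (s • (A *ᵥ v) + t • (B *ᵥ v)) := by
            rw [sub_mulVec, smul_mulVec, smul_add, smul_smul, smul_smul, inv_mul_cancel₀ hs,
              one_smul, sub_eq_add_neg, ← neg_smul, neg_div, neg_neg, div_eq_inv_mul]
        _ = 0 := by rw [hst, smul_zero]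
    exact absurd (hsq _ (by simpa only [sq] using sq_dvd_det_pencil hA hB hv hμ hvB))
      (Polynomial.not_isUnit_X_sub_C _)

end Pencil

end Matrix

open Matrix

theorem Polynomial.separable_of_mul_add_mul_derivative_eq_C {K : Type*} [Field K] {p a b : K[X]}
    {c : K} (hc : c ≠ 0) (h : a * p + b * derivative p = C c) : p.Separable :=
  ⟨C c⁻¹ * a, C c⁻¹ * b, by
    rw [mul_assoc, mul_assoc, ← mul_add, h, ← C_mul, inv_mul_cancel₀ hc, C_1]⟩

theorem MvPolynomial.pderiv_ofNat {σ R : Type*} [CommSemiring R] (i : σ) (n : ℕ)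
    [n.AtLeastTwo] : pderiv i (ofNat(n) : MvPolynomial σ R) = 0 :=
  (pderiv i).map_natCast n

def hessQ1 : Matrix (Fin 6) (Fin 6) ℚ :=
  !![0, 1, 1, 0, 0, 0; 1, 0, -4, 0, 0, 2; 1, -4, 0, 0, 0, 2; 0, 0, 0, 2, 0, -2;
    0, 0, 0, 0, 2, 0; 0, 2, 2, -2, 0, -2]

def hessQ2 : Matrix (Fin 6) (Fin 6) ℚ :=
  !![0, 1, -1, 0, 1, 0; 1, -4, 0, 2, 0, 0; -1, 0, 0, 0, -2, 2; 0, 2, 0, 0, 0, 2;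
    1, 0, -2, 0, 0, 0; 0, 0, 2, 2, 0, 0]

theorem hessQ1_isSymm : hessQ1.IsSymm := by
  ext i j; fin_cases i <;> fin_cases j <;> rfl

theorem hessQ2_isSymm : hessQ2.IsSymm := by
  ext i j; fin_cases i <;> fin_cases j <;> rfl

section Gradients

variable {K : Type*} [CommRing K] [Algebra ℚ K]

theorem aeval_pderiv_Q1Q (v : Fin 6 → K) (j : Fin 6) :
    aeval v (pderiv j Q1Q) = (hessQ1.map (algebraMap ℚ K) *ᵥ v) j := by
  fin_cases j <;>
    simp [Q1Q, hessQ1, mulVec, dotProduct, Fin.sum_univ_succ, pderiv_X, pderiv_ofNat,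
      map_ofNat] <;> ring

theorem aeval_pderiv_Q2Q (v : Fin 6 → K) (j : Fin 6) :
    aeval v (pderiv j Q2Q) = (hessQ2.map (algebraMap ℚ K) *ᵥ v) j := by
  fin_cases j <;>
    simp [Q2Q, hessQ2, mulVec, dotProduct, Fin.sum_univ_succ, pderiv_X, pderiv_ofNat,
      map_ofNat] <;> ring

theorem dotProduct_hessQ2_mulVec (v : Fin 6 → K) :
    v ⬝ᵥ hessQ2.map (algebraMap ℚ K) *ᵥ v = 2 * aeval v Q2Q := by
  simp [Q2Q, hessQ2, mulVec, dotProduct, Fin.sum_univ_succ, map_ofNat]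
  ring

end Gradients

theorem det_hessQ2 : hessQ2.det = 64 := by
  simp [det_succ_row_zero, Fin.sum_univ_succ, hessQ2, Fin.succAbove]
  norm_num

local notation "T" => (Polynomial.X : ℚ[X])

set_option maxHeartbeats 1000000 in
theorem det_pencil_hessQ :
    (pencil hessQ1 hessQ2).det =
      64 * (T ^ 6 + 3 * T ^ 5 - 2 * T ^ 4 - 3 * T ^ 3 + 3 * T ^ 2 + 3 * T + 2) := by
  simp [pencil, det_succ_row_zero, Fin.sum_univ_succ, hessQ1, hessQ2, Fin.succAbove, map_ofNat]
  ring

theorem separable_det_pencil_hessQ : (pencil hessQ1 hessQ2).det.Separable := by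
  rw [det_pencil_hessQ]
  -- `a` and `b` come from the extended Euclidean algorithm applied to `p` and `p'`
  refine Polynomial.separable_of_mul_add_mul_derivative_eq_C (c := 149743897 * 64)
    (a := 23753412 * T ^ 4 + 62127684 * T ^ 3 - 44128635 * T ^ 2 - 63216054 * T + 92552840)
    (b := -3958902 * T ^ 5 - 12334065 * T ^ 4 + 9765361 * T ^ 3 + 18389085 * T ^ 2 -
      26834282 * T - 11787261) (by norm_num) ?_
  simp [map_ofNat]
  ring

/-- `X = {Q1 = 0} ∩ {Q2 = 0} ⊂ ℙ^5_ℚ` is smooth of dimension 3: at every point of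
`X(ℚ̄)` the 2×6 Jacobian matrix of `(Q1, Q2)` has rank 2, i.e. its two rows (the
gradients) are linearly independent. -/
theorem stmt_16 :
    ∀ v : Fin 6 → AlgebraicClosure ℚ, v ≠ 0 →
      aeval v Q1Q = 0 → aeval v Q2Q = 0 →
      LinearIndependent (AlgebraicClosure ℚ)
        ![fun j : Fin 6 => aeval v (pderiv j Q1Q),
          fun j : Fin 6 => aeval v (pderiv j Q2Q)] := by
  intro v hv _ hQ2
  simp only [aeval_pderiv_Q1Q, aeval_pderiv_Q2Q]
  refine linearIndependent_mulVec_pair (hessQ1_isSymm.map _) (hessQ2_isSymm.map _) ?_ ?_ hv ?_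
  · rw [← RingHom.mapMatrix_apply, ← RingHom.map_det, det_hessQ2, map_ofNat]
    norm_num
  · rw [← pencil_map, ← RingHom.mapMatrix_apply, ← RingHom.map_det]
    exact separable_det_pencil_hessQ.map.squarefree
  · rw [dotProduct_hessQ2_mulVec, hQ2, mul_zero]
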